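/- arXiv:1801.10388 — 4 statements merged into one kernel-verified Lean document; each statement's English description precedes it below -/
import Mathlib

section
/- Let a be a complex number and let (z, w) : [0,1] → ℂ × (ℂ \ {0}) be a closed C¹ path satisfying w(t)² = z(t)⁸ + a·z(t)⁴ + 1 for all t. Then ∫₀¹ (z(t)³/w(t)³)·z'(t) dt = 0 and ∫₀¹ (z(t)⁷/w(t)³)·z'(t) dt = 0. -/
open MeasureTheory Set intervalIntegral

private lemma hdPow (f : ℝ → ℂ) (f' : ℂ) (t : ℝ) (n : ℕ) (h : HasDerivAt f f' t) :
    HasDerivAt (fun s => f s ^ n) ((n : ℂ) * f t ^ (n-1) * f') t := by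
  simpa [Function.comp_def, mul_comm, mul_assoc] using
    (HasDerivAt.comp t (hasDerivAt_pow n (f t)) h)

private lemma myInt (z w : ℝ → ℂ) (k : ℕ)
    (hz : ContDiffOn ℝ 1 z (Set.Icc 0 1)) (hw : ContinuousOn w (Set.Icc 0 1))
    (hw0 : ∀ t ∈ Set.Icc (0:ℝ) 1, w t ≠ 0) :
    IntervalIntegrable (fun t => (z t)^k / (w t)^3 * deriv z t) volume 0 1 := by
  have huniq : UniqueDiffOn ℝ (Set.Icc (0:ℝ) 1) := uniqueDiffOn_Icc one_pos
  have hg : ContinuousOn (fun t => (z t)^k / (w t)^3 * derivWithin z (Set.Icc 0 1) t)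
      (Set.Icc 0 1) := by
    apply ContinuousOn.mul
    · exact ((hz.continuousOn.pow k).div (hw.pow 3)
        (fun t ht => pow_ne_zero 3 (hw0 t ht)))
    · exact hz.continuousOn_derivWithin huniq le_rfl
  have hgi : IntervalIntegrable (fun t => (z t)^k / (w t)^3 * derivWithin z (Set.Icc 0 1) t)
      volume 0 1 := hg.intervalIntegrable_of_Icc zero_le_one
  rw [intervalIntegrable_iff_integrableOn_Ioo_of_le zero_le_one] at hgi ⊢
  apply hgi.congr_fun ?_ measurableSet_Ioo
  intro t ht
  have : derivWithin z (Set.Icc (0:ℝ) 1) t = deriv z t :=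
    derivWithin_of_mem_nhds (Icc_mem_nhds ht.1 ht.2)
  simp [this]

private lemma myMain (z w : ℝ → ℂ) (k : ℕ) (F : ℝ → ℂ)
    (hz : ContDiffOn ℝ 1 z (Set.Icc 0 1)) (hw : ContinuousOn w (Set.Icc 0 1))
    (hw0 : ∀ t ∈ Set.Icc (0:ℝ) 1, w t ≠ 0)
    (hFc : ContinuousOn F (Set.Icc 0 1)) (hF01 : F 0 = F 1)
    (hFd : ∀ t ∈ Set.Ioo (0:ℝ) 1, HasDerivAt F ((z t)^k / (w t)^3 * deriv z t) t) :
    ∫ t in (0:ℝ)..1, (z t)^k / (w t)^3 * deriv z t = 0 := by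
  rw [integral_eq_sub_of_hasDerivAt_of_le zero_le_one hFc hFd (myInt z w k hz hw hw0),
    hF01, sub_self]

private lemma myDeriv (a : ℂ) (z w : ℝ → ℂ)
    (hz : ContDiffOn ℝ 1 z (Set.Icc 0 1)) (hw : ContDiffOn ℝ 1 w (Set.Icc 0 1))
    (hcurve : ∀ t ∈ Set.Icc (0:ℝ) 1,
      (w t) ^ 2 = (z t) ^ 8 + a * (z t) ^ 4 + 1)
    (t : ℝ) (ht : t ∈ Set.Ioo (0:ℝ) 1) :
    HasDerivAt z (deriv z t) t ∧ HasDerivAt w (deriv w t) t ∧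
    2 * w t * deriv w t = (8 * (z t)^7 + 4 * a * (z t)^3) * deriv z t := by
  have hmem : Set.Icc (0:ℝ) 1 ∈ nhds t := Icc_mem_nhds ht.1 ht.2
  have hZ : HasDerivAt z (deriv z t) t :=
    (((hz t (Set.Ioo_subset_Icc_self ht)).differentiableWithinAt one_ne_zero).differentiableAt
      hmem).hasDerivAt
  have hW : HasDerivAt w (deriv w t) t :=
    (((hw t (Set.Ioo_subset_Icc_self ht)).differentiableWithinAt one_ne_zero).differentiableAt
      hmem).hasDerivAt
  refine ⟨hZ, hW, ?_⟩
  have h1 := hdPow w (deriv w t) t 2 hW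
  have h2 := ((hdPow z (deriv z t) t 8 hZ).add
    ((hdPow z (deriv z t) t 4 hZ).const_mul a)).add_const 1
  have heq : (fun s => (w s)^2) =ᶠ[nhds t] (fun s => (z s)^8 + a * (z s)^4 + 1) := by
    filter_upwards [hmem] with s hs using hcurve s hs
  have h3 := h1.congr_of_eventuallyEq heq.symm
  have h4 := h3.unique h2
  push_cast at h4
  linear_combination h4


set_option maxHeartbeats 1000000 in
private lemma myDeg (z w : ℝ → ℂ) (ε c : ℂ) (hε : ε^2 = 1) (hc2 : c^2 = 1)
    (hz : ContDiffOn ℝ 1 z (Set.Icc 0 1)) (hw : ContinuousOn w (Set.Icc 0 1))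
    (hzc : z 0 = z 1)
    (hw0 : ∀ t ∈ Set.Icc (0:ℝ) 1, w t ≠ 0)
    (hconst : ∀ t ∈ Set.Icc (0:ℝ) 1, w t = c * ((z t)^4 + ε)) :
    (∫ t in (0:ℝ)..1, ((z t) ^ 3 / (w t) ^ 3) * deriv z t) = 0 ∧
    (∫ t in (0:ℝ)..1, ((z t) ^ 7 / (w t) ^ 3) * deriv z t) = 0 := by
  have hcne : c ≠ 0 := by intro h; rw [h] at hc2; simp at hc2
  have hvne : ∀ t ∈ Set.Icc (0:ℝ) 1, (z t)^4 + ε ≠ 0 := by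
    intro t ht h
    exact hw0 t ht (by rw [hconst t ht, h, mul_zero])
  have hvcont : ContinuousOn (fun t => (z t)^4 + ε) (Set.Icc 0 1) :=
    (hz.continuousOn.pow 4).add continuousOn_const
  have hVd : ∀ t ∈ Set.Ioo (0:ℝ) 1, HasDerivAt z (deriv z t) t ∧
      HasDerivAt (fun s => (z s)^4 + ε) (4 * (z t)^3 * deriv z t) t := by
    intro t ht
    have hmem : Set.Icc (0:ℝ) 1 ∈ nhds t := Icc_mem_nhds ht.1 ht.2
    have hZ : HasDerivAt z (deriv z t) t :=
      (((hz t (Set.Ioo_subset_Icc_self ht)).differentiableWithinAt one_ne_zero).differentiableAt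
        hmem).hasDerivAt
    refine ⟨hZ, ?_⟩
    have := (hdPow z (deriv z t) t 4 hZ).add_const ε
    norm_num only at this
    exact this
  constructor
  · apply myMain z w 3 (fun t => -c / (8 * ((z t)^4 + ε)^2)) hz hw hw0
    · apply ContinuousOn.div continuousOn_const (continuousOn_const.mul (hvcont.pow 2))
      intro t ht
      exact mul_ne_zero (by norm_num) (pow_ne_zero 2 (hvne t ht))
    · simp only [hzc]
    · intro t ht
      have htIcc := Set.Ioo_subset_Icc_self ht
      obtain ⟨hZ, hV⟩ := hVd t ht
      have hden : HasDerivAt (fun s => 8 * ((z s)^4 + ε)^2)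
          (8 * (2 * ((z t)^4 + ε) * (4 * (z t)^3 * deriv z t))) t := by
        have := (hdPow (fun s => (z s)^4 + ε) (4 * (z t)^3 * deriv z t) t 2 hV).const_mul (8:ℂ)
        norm_num at this ⊢
        convert this using 1 <;> ring
      have hdne : 8 * ((z t)^4 + ε)^2 ≠ 0 :=
        mul_ne_zero (by norm_num) (pow_ne_zero 2 (hvne t htIcc))
      have hdiv : HasDerivAt (fun t => -c / (8 * ((z t)^4 + ε)^2)) _ t :=
        (hasDerivAt_const t (-c)).div hden hdne
      convert hdiv using 1
      rw [hconst t htIcc]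
      field_simp [hvne t htIcc]
      linear_combination (-8 * z t^3 * deriv z t * (c^2+1)) * hc2
  · apply myMain z w 7
      (fun t => c * ε / (8 * ((z t)^4 + ε)^2) - c / (4 * ((z t)^4 + ε))) hz hw hw0
    · apply ContinuousOn.sub
      · apply ContinuousOn.div continuousOn_const (continuousOn_const.mul (hvcont.pow 2))
        intro t ht
        exact mul_ne_zero (by norm_num) (pow_ne_zero 2 (hvne t ht))
      · apply ContinuousOn.div continuousOn_const (continuousOn_const.mul hvcont)
        intro t ht
        exact mul_ne_zero (by norm_num) (hvne t ht)
    · simp only [hzc]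
    · intro t ht
      have htIcc := Set.Ioo_subset_Icc_self ht
      obtain ⟨hZ, hV⟩ := hVd t ht
      have hden : HasDerivAt (fun s => 8 * ((z s)^4 + ε)^2)
          (8 * (2 * ((z t)^4 + ε) * (4 * (z t)^3 * deriv z t))) t := by
        have := (hdPow (fun s => (z s)^4 + ε) (4 * (z t)^3 * deriv z t) t 2 hV).const_mul (8:ℂ)
        norm_num at this ⊢
        convert this using 1 <;> ring
      have hden2 : HasDerivAt (fun s => 4 * ((z s)^4 + ε))
          (4 * (4 * (z t)^3 * deriv z t)) t := hV.const_mul (4:ℂ)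
      have hdne : 8 * ((z t)^4 + ε)^2 ≠ 0 :=
        mul_ne_zero (by norm_num) (pow_ne_zero 2 (hvne t htIcc))
      have hdne2 : 4 * ((z t)^4 + ε) ≠ 0 := mul_ne_zero (by norm_num) (hvne t htIcc)
      have hdiv : HasDerivAt (fun t => c * ε / (8 * ((z t)^4 + ε)^2) - c / (4 * ((z t)^4 + ε))) _ t :=
        ((hasDerivAt_const t (c * ε)).div hden hdne).sub
        ((hasDerivAt_const t c).div hden2 hdne2)
      convert hdiv using 1
      rw [hconst t htIcc]
      field_simp [hvne t htIcc]
      linear_combination (-32 * z t^7 * deriv z t * (c^2+1)) * hc2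

set_option maxHeartbeats 1000000 in
private lemma myNonDeg (a : ℂ) (z w : ℝ → ℂ) (h4 : a^2 ≠ 4)
    (hz : ContDiffOn ℝ 1 z (Set.Icc 0 1)) (hw : ContDiffOn ℝ 1 w (Set.Icc 0 1))
    (hzc : z 0 = z 1) (hwc : w 0 = w 1)
    (hw0 : ∀ t ∈ Set.Icc (0:ℝ) 1, w t ≠ 0)
    (hcurve : ∀ t ∈ Set.Icc (0:ℝ) 1,
      (w t) ^ 2 = (z t) ^ 8 + a * (z t) ^ 4 + 1) :
    (∫ t in (0:ℝ)..1, ((z t) ^ 3 / (w t) ^ 3) * deriv z t) = 0 ∧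
    (∫ t in (0:ℝ)..1, ((z t) ^ 7 / (w t) ^ 3) * deriv z t) = 0 := by
  have hane : (4:ℂ) - a^2 ≠ 0 := sub_ne_zero.mpr (Ne.symm h4)
  have hdcne : (2:ℂ) * (4 - a^2) ≠ 0 := mul_ne_zero two_ne_zero hane
  constructor
  · apply myMain z w 3 (fun t => (2 * (z t)^4 + a) / (2 * (4 - a^2) * w t))
      hz hw.continuousOn hw0
    · apply ContinuousOn.div
        ((continuousOn_const.mul (hz.continuousOn.pow 4)).add continuousOn_const)
        (continuousOn_const.mul hw.continuousOn)
      intro t ht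
      exact mul_ne_zero hdcne (hw0 t ht)
    · rw [hzc, hwc]
    · intro t ht
      have htIcc := Set.Ioo_subset_Icc_self ht
      obtain ⟨hZ, hW, hrel⟩ := myDeriv a z w hz hw hcurve t ht
      have hnum : HasDerivAt (fun s => 2 * (z s)^4 + a)
          (2 * (4 * (z t)^3 * deriv z t)) t := by
        have := ((hdPow z (deriv z t) t 4 hZ).const_mul (2:ℂ)).add_const a
        norm_num at this ⊢
        convert this using 1 <;> ring
      have hden : HasDerivAt (fun s => 2 * (4 - a^2) * w s)
          (2 * (4 - a^2) * deriv w t) t := hW.const_mul _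
      have hdne : 2 * (4 - a^2) * w t ≠ 0 := mul_ne_zero hdcne (hw0 t htIcc)
      have hdiv : HasDerivAt (fun t => (2 * (z t)^4 + a) / (2 * (4 - a^2) * w t)) _ t :=
        hnum.div hden hdne
      convert hdiv using 1
      have hW2 := hcurve t htIcc
      have hWne := hw0 t htIcc
      field_simp
      linear_combination ((2*z t^4+a)/2) * hrel + (-8*z t^3*deriv z t) * hW2
  · apply myMain z w 7 (fun t => -(a * (z t)^4 + 2) / (2 * (4 - a^2) * w t))
      hz hw.continuousOn hw0
    · apply ContinuousOn.div
        (((continuousOn_const.mul (hz.continuousOn.pow 4)).add continuousOn_const).neg)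
        (continuousOn_const.mul hw.continuousOn)
      intro t ht
      exact mul_ne_zero hdcne (hw0 t ht)
    · rw [hzc, hwc]
    · intro t ht
      have htIcc := Set.Ioo_subset_Icc_self ht
      obtain ⟨hZ, hW, hrel⟩ := myDeriv a z w hz hw hcurve t ht
      have hnum : HasDerivAt (fun s => -(a * (z s)^4 + 2))
          (-(a * (4 * (z t)^3 * deriv z t))) t := by
        have := (((hdPow z (deriv z t) t 4 hZ).const_mul a).add_const (2:ℂ)).neg
        norm_num only at this ⊢
        exact this
      have hden : HasDerivAt (fun s => 2 * (4 - a^2) * w s)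
          (2 * (4 - a^2) * deriv w t) t := hW.const_mul _
      have hdne : 2 * (4 - a^2) * w t ≠ 0 := mul_ne_zero hdcne (hw0 t htIcc)
      have hdiv : HasDerivAt (fun t => -(a * (z t)^4 + 2) / (2 * (4 - a^2) * w t)) _ t :=
        hnum.div hden hdne
      convert hdiv using 1
      have hW2 := hcurve t htIcc
      have hWne := hw0 t htIcc
      field_simp
      linear_combination (-(a*z t^4+2)/2) * hrel + (4*a*z t^3*deriv z t) * hW2

theorem stmt6 (a : ℂ) (z w : ℝ → ℂ)
    (hz : ContDiffOn ℝ 1 z (Set.Icc 0 1)) (hw : ContDiffOn ℝ 1 w (Set.Icc 0 1))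
    (hzc : z 0 = z 1) (hwc : w 0 = w 1)
    (hw0 : ∀ t ∈ Set.Icc (0:ℝ) 1, w t ≠ 0)
    (hcurve : ∀ t ∈ Set.Icc (0:ℝ) 1,
      (w t) ^ 2 = (z t) ^ 8 + a * (z t) ^ 4 + 1) :
    (∫ t in (0:ℝ)..1, ((z t) ^ 3 / (w t) ^ 3) * deriv z t) = 0 ∧
    (∫ t in (0:ℝ)..1, ((z t) ^ 7 / (w t) ^ 3) * deriv z t) = 0 := by
  have h01 : (0:ℝ) ∈ Set.Icc (0:ℝ) 1 := ⟨le_rfl, zero_le_one⟩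
  by_cases h4 : a^2 = 4
  · obtain ⟨ε, hε, ha⟩ : ∃ ε : ℂ, ε^2 = 1 ∧ a = 2 * ε :=
      ⟨a / 2, by rw [div_pow, h4]; norm_num, by ring⟩
    have hveq : ∀ t ∈ Set.Icc (0:ℝ) 1, (w t)^2 = ((z t)^4 + ε)^2 := by
      intro t ht
      rw [hcurve t ht]
      linear_combination -hε + ((z t)^4) * ha
    have hvne : ∀ t ∈ Set.Icc (0:ℝ) 1, (z t)^4 + ε ≠ 0 := by
      intro t ht hv
      exact hw0 t ht (by
        have := hveq t ht
        rw [hv] at this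
        simpa [pow_eq_zero_iff] using this)
    have hvcont : ContinuousOn (fun t => (z t)^4 + ε) (Set.Icc 0 1) :=
      (hz.continuousOn.pow 4).add continuousOn_const
    have hr1 : ∀ t ∈ Set.Icc (0:ℝ) 1, w t / ((z t)^4 + ε) = 1 ∨
        w t / ((z t)^4 + ε) = -1 := by
      intro t ht
      have hrt : (w t / ((z t)^4 + ε))^2 = 1 := by
        rw [div_pow, hveq t ht, div_self (pow_ne_zero 2 (hvne t ht))]
      have : (w t / ((z t)^4 + ε) - 1) * (w t / ((z t)^4 + ε) + 1) = 0 := by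
        linear_combination hrt
      rcases mul_eq_zero.mp this with h | h
      · left; linear_combination h
      · right; linear_combination h
    have hc2 : (w 0 / ((z 0)^4 + ε))^2 = 1 := by
      rw [div_pow, hveq 0 h01, div_self (pow_ne_zero 2 (hvne 0 h01))]
    have hconst : ∀ t ∈ Set.Icc (0:ℝ) 1,
        w t = (w 0 / ((z 0)^4 + ε)) * ((z t)^4 + ε) := by
      have hrcont : ContinuousOn (fun t => w t / ((z t)^4 + ε)) (Set.Icc 0 1) :=
        hw.continuousOn.div hvcont hvne
      have hscont : ContinuousOn (fun t => (w t / ((z t)^4 + ε)).re) (Set.Icc 0 1) :=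
        Complex.continuous_re.comp_continuousOn hrcont
      intro t ht
      have key : w t / ((z t)^4 + ε) = w 0 / ((z 0)^4 + ε) := by
        rcases hr1 t ht with h1 | h1 <;> rcases hr1 0 h01 with h0 | h0 <;>
          try (rw [h1, h0])
        · exfalso
          have hsub : Set.uIcc (0:ℝ) t ⊆ Set.Icc 0 1 := Set.uIcc_subset_Icc h01 ht
          have hmem0 : (0:ℝ) ∈ Set.uIcc ((w 0 / ((z 0)^4 + ε)).re)
              ((w t / ((z t)^4 + ε)).re) := by
            rw [h0, h1]; norm_num [Set.mem_uIcc]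
          obtain ⟨u, hu, hsu⟩ := intermediate_value_uIcc (hscont.mono hsub) hmem0
          rcases hr1 u (hsub hu) with h | h <;> simp only [h] at hsu <;> norm_num at hsu
        · exfalso
          have hsub : Set.uIcc (0:ℝ) t ⊆ Set.Icc 0 1 := Set.uIcc_subset_Icc h01 ht
          have hmem0 : (0:ℝ) ∈ Set.uIcc ((w 0 / ((z 0)^4 + ε)).re)
              ((w t / ((z t)^4 + ε)).re) := by
            rw [h0, h1]; norm_num [Set.mem_uIcc]
          obtain ⟨u, hu, hsu⟩ := intermediate_value_uIcc (hscont.mono hsub) hmem0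
          rcases hr1 u (hsub hu) with h | h <;> simp only [h] at hsu <;> norm_num at hsu
      rw [div_eq_div_iff (hvne t ht) (hvne 0 h01)] at key
      rw [div_mul_eq_mul_div, eq_div_iff (hvne 0 h01)]
      linear_combination key
    exact myDeg z w ε (w 0 / ((z 0)^4 + ε)) hε hc2 hz hw.continuousOn hzc hw0 hconst
  · exact myNonDeg a z w h4 hz hw hzc hwc hw0 hcurve
end

section
/- Let a ≠ 0 be a complex number with a⁶ + 1 ≠ 0, and let (z, w) : [0,1] → ℂ × (ℂ \ {0}) be a closed C¹ path satisfying w(t)² = z(t)·(z(t)³ − a³)·(z(t)³ + 1/a³) and z(t) ≠ 0 for all t. Then ∫₀¹ (z(t)⁴/w(t)³)·z'(t) dt = (a⁶/(3·(a⁶+1)²))·(2·∫₀¹ (z(t)³/w(t))·z'(t) dt − (a³ − 1/a³)·∫₀¹ (1/w(t))·z'(t) dt). -/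
set_option maxHeartbeats 2000000

open Set MeasureTheory intervalIntegral

private lemma cpow_deriv (z : ℝ → ℂ) (t : ℝ) (d : ℂ) (h : HasDerivAt z d t) :
    ∀ n : ℕ, HasDerivAt (fun s => z s ^ (n+1)) ((n+1) * z t ^ n * d) t := by
  intro n
  induction n with
  | zero => simpa using h
  | succ k ih =>
    have h2 : HasDerivAt (fun s => z s ^ (k+1) * z s) ((↑(k+1) + 1) * z t ^ (k+1) * d) t := by
      have := ih.mul h
      refine this.congr_deriv ?_
      push_cast; ring
    have he : (fun s => z s ^ (k+1) * z s) = fun s => z s ^ (k+1+1) := by funext s; ring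
    rwa [he] at h2

theorem stmt17 (a : ℂ) (ha : a ≠ 0) (ha6 : a ^ 6 + 1 ≠ 0) (z w : ℝ → ℂ)
    (hz : ContDiffOn ℝ 1 z (Set.Icc 0 1)) (hw : ContDiffOn ℝ 1 w (Set.Icc 0 1))
    (hzc : z 0 = z 1) (hwc : w 0 = w 1)
    (hw0 : ∀ t ∈ Set.Icc (0:ℝ) 1, w t ≠ 0)
    (hz0 : ∀ t ∈ Set.Icc (0:ℝ) 1, z t ≠ 0)
    (hcurve : ∀ t ∈ Set.Icc (0:ℝ) 1,
      (w t) ^ 2 = z t * ((z t) ^ 3 - a ^ 3) * ((z t) ^ 3 + 1 / a ^ 3)) :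
    ∫ t in (0:ℝ)..1, ((z t) ^ 4 / (w t) ^ 3) * deriv z t =
      (a ^ 6 / (3 * (a ^ 6 + 1) ^ 2)) *
        (2 * (∫ t in (0:ℝ)..1, ((z t) ^ 3 / w t) * deriv z t)
          - (a ^ 3 - 1 / a ^ 3) * ∫ t in (0:ℝ)..1, (1 / w t) * deriv z t) := by
  have ha3 : (a:ℂ) ^ 3 ≠ 0 := pow_ne_zero _ ha
  obtain ⟨b, hb⟩ : ∃ x : ℂ, x = 1 / a ^ 3 - a ^ 3 := ⟨_, rfl⟩
  have hP : ∀ t ∈ Set.Icc (0:ℝ) 1, (w t) ^ 2 = (z t) ^ 7 + b * (z t) ^ 4 - z t := by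
    intro t ht
    rw [hcurve t ht, hb]
    field_simp
    ring
  set zd := derivWithin z (Set.Icc (0:ℝ) 1) with hzdd
  set wd := derivWithin w (Set.Icc (0:ℝ) 1) with hwdd
  have hzdc : ContinuousOn zd (Set.Icc 0 1) :=
    hz.continuousOn_derivWithin (uniqueDiffOn_Icc one_pos) le_rfl
  have hzcont : ContinuousOn z (Set.Icc 0 1) := hz.continuousOn
  have hwcont : ContinuousOn w (Set.Icc 0 1) := hw.continuousOn
  have hzder : ∀ t ∈ Set.Ioo (0:ℝ) 1, HasDerivAt z (zd t) t := by
    intro t ht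
    have hmem : Set.Icc (0:ℝ) 1 ∈ nhds t := Icc_mem_nhds ht.1 ht.2
    have hd : DifferentiableAt ℝ z t :=
      (hz.differentiableOn one_ne_zero t (Ioo_subset_Icc_self ht)).differentiableAt hmem
    have he : zd t = deriv z t := derivWithin_of_mem_nhds hmem
    rw [he]
    exact hd.hasDerivAt
  have hwder : ∀ t ∈ Set.Ioo (0:ℝ) 1, HasDerivAt w (wd t) t := by
    intro t ht
    have hmem : Set.Icc (0:ℝ) 1 ∈ nhds t := Icc_mem_nhds ht.1 ht.2
    have hd : DifferentiableAt ℝ w t :=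
      (hw.differentiableOn one_ne_zero t (Ioo_subset_Icc_self ht)).differentiableAt hmem
    have he : wd t = deriv w t := derivWithin_of_mem_nhds hmem
    rw [he]
    exact hd.hasDerivAt
  have hzd_eq : ∀ t ∈ Set.Ioo (0:ℝ) 1, zd t = deriv z t := fun t ht =>
    derivWithin_of_mem_nhds (Icc_mem_nhds ht.1 ht.2)
  -- derivative of the curve relation
  have hQ : ∀ t ∈ Set.Ioo (0:ℝ) 1,
      2 * w t * wd t = (7 * (z t) ^ 6 + 4 * b * (z t) ^ 3 - 1) * zd t := by
    intro t ht
    have h1 : HasDerivAt (fun s => (w s) ^ 2) (2 * w t * wd t) t := by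
      have := cpow_deriv w t (wd t) (hwder t ht) 1
      refine this.congr_deriv ?_
      push_cast; ring
    have h2 : HasDerivAt (fun s => (z s) ^ 7 + b * (z s) ^ 4 - z s)
        ((7 * (z t) ^ 6 + 4 * b * (z t) ^ 3 - 1) * zd t) t := by
      have hz' := hzder t ht
      have h7 := cpow_deriv z t (zd t) hz' 6
      have h4 := cpow_deriv z t (zd t) hz' 3
      have := (h7.add (h4.const_mul b)).sub hz'
      refine this.congr_deriv ?_
      push_cast; ring
    have heq : (fun s => (z s) ^ 7 + b * (z s) ^ 4 - z s) =ᶠ[nhds t] (fun s => (w s) ^ 2) := by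
      filter_upwards [Icc_mem_nhds ht.1 ht.2] with s hs using (hP s hs).symm
    exact (h1.congr_of_eventuallyEq heq).unique h2
  -- the two exact one-forms
  set g1 : ℝ → ℂ := fun t =>
    ((z t) ^ 10 + 4 * b * (z t) ^ 7 - 7 * (z t) ^ 4) * zd t / (2 * (w t) ^ 3) with hg1
  set g2 : ℝ → ℂ := fun t =>
    (-5 * (z t) ^ 7 - 2 * b * (z t) ^ 4 - z t) * zd t / (2 * (w t) ^ 3) with hg2
  have hF1 : ∀ t ∈ Set.Ioo (0:ℝ) 1, HasDerivAt (fun s => (z s) ^ 4 / w s) (g1 t) t := by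
    intro t ht
    have hz' := hzder t ht
    have hw' := hwder t ht
    have hwne := hw0 t (Ioo_subset_Icc_self ht)
    have hPt := hP t (Ioo_subset_Icc_self ht)
    have hQt := hQ t ht
    have h4 := cpow_deriv z t (zd t) hz' 3
    have hder := h4.div hw' hwne
    refine hder.congr_deriv ?_
    symm
    rw [hg1]
    rw [div_eq_div_iff (by exact mul_ne_zero two_ne_zero (pow_ne_zero 3 hwne)) (pow_ne_zero 2 hwne)]
    push_cast
    linear_combination (-(8:ℂ) * (z t)^3 * zd t * (w t)^2) * hPt + ((z t)^4 * (w t)^2) * hQt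
  have hF2 : ∀ t ∈ Set.Ioo (0:ℝ) 1, HasDerivAt (fun s => z s / w s) (g2 t) t := by
    intro t ht
    have hz' := hzder t ht
    have hw' := hwder t ht
    have hwne := hw0 t (Ioo_subset_Icc_self ht)
    have hPt := hP t (Ioo_subset_Icc_self ht)
    have hQt := hQ t ht
    have hder := hz'.div hw' hwne
    refine hder.congr_deriv ?_
    symm
    rw [hg2]
    rw [div_eq_div_iff (by exact mul_ne_zero two_ne_zero (pow_ne_zero 3 hwne)) (pow_ne_zero 2 hwne)]
    linear_combination (-(2:ℂ) * zd t * (w t)^2) * hPt + (z t * (w t)^2) * hQt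
  -- continuity and integrability
  have hw3 : ∀ t ∈ Set.Icc (0:ℝ) 1, (2:ℂ) * (w t) ^ 3 ≠ 0 := fun t ht =>
    mul_ne_zero two_ne_zero (pow_ne_zero 3 (hw0 t ht))
  have cg1 : ContinuousOn g1 (Set.Icc 0 1) := by
    rw [hg1]
    exact ((((hzcont.pow 10).add (continuousOn_const.mul (hzcont.pow 7))).sub
      (continuousOn_const.mul (hzcont.pow 4))).mul hzdc).div
      (continuousOn_const.mul (hwcont.pow 3)) hw3
  have cg2 : ContinuousOn g2 (Set.Icc 0 1) := by
    rw [hg2]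
    exact (((((continuousOn_const.mul (hzcont.pow 7)).sub
      (continuousOn_const.mul (hzcont.pow 4))).sub hzcont).mul hzdc).div
      (continuousOn_const.mul (hwcont.pow 3)) hw3)
  have ig1 : IntervalIntegrable g1 volume 0 1 := by
    apply ContinuousOn.intervalIntegrable
    rwa [Set.uIcc_of_le zero_le_one]
  have ig2 : IntervalIntegrable g2 volume 0 1 := by
    apply ContinuousOn.intervalIntegrable
    rwa [Set.uIcc_of_le zero_le_one]
  -- closed-path integrals vanish
  have hI1 : ∫ t in (0:ℝ)..1, g1 t = 0 := by
    rw [integral_eq_sub_of_hasDeriv_right_of_le zero_le_one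
      ((hzcont.pow 4).div hwcont hw0)
      (fun x hx => (hF1 x hx).hasDerivWithinAt) ig1]
    simp [Pi.div_apply, hzc, hwc]
  have hI2 : ∫ t in (0:ℝ)..1, g2 t = 0 := by
    rw [integral_eq_sub_of_hasDeriv_right_of_le zero_le_one
      (hzcont.div hwcont hw0)
      (fun x hx => (hF2 x hx).hasDerivWithinAt) ig2]
    simp [Pi.div_apply, hzc, hwc]
  -- replace deriv z by zd in the statement integrals
  have hae : ∀ᵐ x : ℝ ∂(volume : Measure ℝ), x ≠ 1 := by
    filter_upwards [compl_mem_ae_iff.mpr (measure_singleton (1:ℝ))] with x hx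
    simpa using hx
  have congr_int : ∀ f : ℝ → ℂ,
      (∫ t in (0:ℝ)..1, f t * deriv z t) = ∫ t in (0:ℝ)..1, f t * zd t := by
    intro f
    apply intervalIntegral.integral_congr_ae
    filter_upwards [hae] with x hx hxI
    rw [Set.uIoc_of_le zero_le_one] at hxI
    rw [← hzd_eq x ⟨hxI.1, lt_of_le_of_ne hxI.2 hx⟩]
  rw [congr_int (fun t => (z t) ^ 4 / (w t) ^ 3), congr_int (fun t => (z t) ^ 3 / w t),
    congr_int (fun t => 1 / w t)]
  -- abbreviations
  obtain ⟨c, hc⟩ : ∃ x : ℂ, x = a ^ 6 / (3 * (a ^ 6 + 1) ^ 2) := ⟨_, rfl⟩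
  obtain ⟨d, hd⟩ : ∃ x : ℂ, x = a ^ 3 - 1 / a ^ 3 := ⟨_, rfl⟩
  rw [← hc, ← hd]
  -- integrability of the base integrands
  have iX3 : IntervalIntegrable (fun t => (z t) ^ 3 / w t * zd t) volume 0 1 := by
    apply ContinuousOn.intervalIntegrable
    rw [Set.uIcc_of_le zero_le_one]
    exact ((hzcont.pow 3).div hwcont hw0).mul hzdc
  have iX0 : IntervalIntegrable (fun t => 1 / w t * zd t) volume 0 1 := by
    apply ContinuousOn.intervalIntegrable
    rw [Set.uIcc_of_le zero_le_one]
    exact (continuousOn_const.div hwcont hw0).mul hzdc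
  have hbc : c * (12 + 3 * b ^ 2) = 1 := by
    rw [hc, hb]
    field_simp
    ring
  have hd' : d = -b := by rw [hd, hb]; ring
  -- pointwise key identity
  have key : Set.EqOn (fun t => (z t) ^ 4 / (w t) ^ 3 * zd t)
      (fun t => (2 * c) * ((z t) ^ 3 / w t * zd t) + (-(c * d)) * (1 / w t * zd t)
        + ((-(4 * c)) * g1 t + (-(2 * b * c)) * g2 t)) (Set.uIcc 0 1) := by
    rw [Set.uIcc_of_le zero_le_one]
    intro t ht
    have hPt := hP t ht
    have hwne := hw0 t ht
    simp only [hg1, hg2]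
    rw [hd']
    field_simp [hwne]
    linear_combination (-(2 * zd t * c * (2 * (z t) ^ 3 + b))) * hPt
      + (-(2 * (z t) ^ 4 * zd t)) * hbc
  rw [integral_congr key]
  rw [integral_add ((iX3.const_mul (2*c)).add (iX0.const_mul (-(c*d))))
    ((ig1.const_mul (-(4*c))).add (ig2.const_mul (-(2*b*c))))]
  rw [integral_add (iX3.const_mul (2*c)) (iX0.const_mul (-(c*d)))]
  rw [integral_add (ig1.const_mul (-(4*c))) (ig2.const_mul (-(2*b*c)))]
  rw [intervalIntegral.integral_const_mul, intervalIntegral.integral_const_mul, intervalIntegral.integral_const_mul, intervalIntegral.integral_const_mul]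
  rw [hI1, hI2]
  ring
end

section
/- Let a ≠ 0 be a complex number and let z, w : ℝ → ℂ be differentiable functions with w(t) ≠ 0 and z(t) ≠ 0 for all t, satisfying w(t)² = z(t)·(z(t)³ − a³)·(z(t)³ + 1/a³) for all t. Then for all integers α, β and all t, the derivative of t ↦ z(t)^α·w(t)^β equals (1/2)·z(t)^(α−1)·w(t)^(β−2)·((2α+7β)·w(t)² + 3β·(a³ − 1/a³)·z(t)⁴ + 6β·z(t))·z'(t). -/
theorem stmt18 (a : ℂ) (ha : a ≠ 0) (z w : ℝ → ℂ)
    (hz : Differentiable ℝ z) (hw : Differentiable ℝ w)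
    (hw0 : ∀ t, w t ≠ 0) (hz0 : ∀ t, z t ≠ 0)
    (hcurve : ∀ t, (w t) ^ 2 = z t * ((z t) ^ 3 - a ^ 3) * ((z t) ^ 3 + 1 / a ^ 3))
    (α β : ℤ) (t : ℝ) :
    deriv (fun s => z s ^ α * w s ^ β) t =
      (1 / 2) * z t ^ (α - 1) * w t ^ (β - 2) *
        ((2 * (α : ℂ) + 7 * (β : ℂ)) * (w t) ^ 2
          + 3 * (β : ℂ) * (a ^ 3 - 1 / a ^ 3) * (z t) ^ 4
          + 6 * (β : ℂ) * z t) * deriv z t := by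
  have hzt := (hz t).hasDerivAt
  have hwt := (hw t).hasDerivAt
  have hz3 : HasDerivAt (fun s => z s ^ 3) ((3 : ℂ) * z t ^ 2 * deriv z t) t := by
    have := (hasDerivAt_pow 3 (z t)).comp t hzt
    simpa [Function.comp_def, mul_assoc] using this
  have h2 : HasDerivAt
      (fun s => z s * (z s ^ 3 - a ^ 3) * (z s ^ 3 + 1 / a ^ 3))
      ((deriv z t * (z t ^ 3 - a ^ 3) + z t * ((3 : ℂ) * z t ^ 2 * deriv z t)) *
          (z t ^ 3 + 1 / a ^ 3)
        + (z t * (z t ^ 3 - a ^ 3)) * ((3 : ℂ) * z t ^ 2 * deriv z t)) t :=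
    (hzt.mul (hz3.sub_const _)).mul (hz3.add_const _)
  have heq : (fun s => w s ^ 2) =
      (fun s => z s * (z s ^ 3 - a ^ 3) * (z s ^ 3 + 1 / a ^ 3)) := funext hcurve
  rw [← heq] at h2
  have h1 : HasDerivAt (fun s => w s ^ 2) ((2 : ℂ) * w t ^ 1 * deriv w t) t := by
    have := (hasDerivAt_pow 2 (w t)).comp t hwt
    simpa [Function.comp_def, mul_assoc] using this
  have hww : w t * deriv w t =
      ((deriv z t * (z t ^ 3 - a ^ 3) + z t * ((3 : ℂ) * z t ^ 2 * deriv z t)) *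
          (z t ^ 3 + 1 / a ^ 3)
        + (z t * (z t ^ 3 - a ^ 3)) * ((3 : ℂ) * z t ^ 2 * deriv z t)) / 2 := by
    have := h1.unique h2
    linear_combination this / 2
  have hAB : a ^ 3 * (1 / a ^ 3) = 1 := by field_simp
  have hzα : z t ^ α = z t ^ (α - 1) * z t := by
    rw [zpow_sub_one₀ (hz0 t), mul_assoc, inv_mul_cancel₀ (hz0 t), mul_one]
  have hwβ : w t ^ β = w t ^ (β - 2) * (w t * w t) := by
    conv_lhs => rw [show β = (β - 2) + 2 by ring]
    rw [zpow_add₀ (hw0 t), zpow_two]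
  have hwβ1 : w t ^ (β - 1) = w t ^ (β - 2) * w t := by
    rw [show β - 1 = (β - 2) + 1 by ring, zpow_add₀ (hw0 t), zpow_one]
  have hdz : HasDerivAt (fun s => z s ^ α) ((α : ℂ) * z t ^ (α - 1) * deriv z t) t := by
    have := (hasDerivAt_zpow α (z t) (Or.inl (hz0 t))).comp t hzt
    simpa [Function.comp_def, mul_assoc] using this
  have hdw : HasDerivAt (fun s => w s ^ β) ((β : ℂ) * w t ^ (β - 1) * deriv w t) t := by
    have := (hasDerivAt_zpow β (w t) (Or.inl (hw0 t))).comp t hwt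
    simpa [Function.comp_def, mul_assoc] using this
  have hd : HasDerivAt (fun s => z s ^ α * w s ^ β)
      (((α : ℂ) * z t ^ (α - 1) * deriv z t) * w t ^ β
        + z t ^ α * ((β : ℂ) * w t ^ (β - 1) * deriv w t)) t := hdz.mul hdw
  rw [hd.deriv]
  have hc := hcurve t
  linear_combination
    ((α : ℂ) * z t ^ (α - 1) * deriv z t) * hwβ
    + ((β : ℂ) * w t ^ (β - 1) * deriv w t) * hzα
    + ((β : ℂ) * z t ^ (α - 1) * z t * deriv w t) * hwβ1
    + ((β : ℂ) * z t ^ (α - 1) * z t * w t ^ (β - 2)) * hww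
    + (-(7 * (β : ℂ) / 2) * z t ^ (α - 1) * w t ^ (β - 2) * deriv z t) * hc
    + (3 * (β : ℂ) * z t * z t ^ (α - 1) * w t ^ (β - 2) * deriv z t) * hAB
end

section
/- Let a be a complex number and let z, w : ℝ → ℂ be differentiable with w(t) ≠ 0 for all t and w(t)² = z(t)⁸ + a·z(t)⁴ + 1 for all t. Then for all integers α, β (with z(t) ≠ 0 for all t if α ≤ 0) and all t, the derivative of t ↦ z(t)^α·w(t)^β equals z(t)^(α−1)·w(t)^(β−2)·((α+4β)·z(t)⁸ + a·(α+2β)·z(t)⁴ + α)·z'(t), and also equals z(t)^(α−1)·w(t)^(β−2)·((α+4β)·w(t)² − 2a·β·z(t)⁴ − 4β)·z'(t). -/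
set_option maxHeartbeats 1000000


theorem stmt19 (a : ℂ) (z w : ℝ → ℂ)
    (hz : Differentiable ℝ z) (hw : Differentiable ℝ w)
    (hw0 : ∀ t, w t ≠ 0)
    (α β : ℤ) (hz0 : α ≤ 0 → ∀ t, z t ≠ 0)
    (hcurve : ∀ t, (w t) ^ 2 = (z t) ^ 8 + a * (z t) ^ 4 + 1) (t : ℝ) :
    deriv (fun s => z s ^ α * w s ^ β) t =
      z t ^ (α - 1) * w t ^ (β - 2) *
        (((α : ℂ) + 4 * (β : ℂ)) * (z t) ^ 8
          + a * ((α : ℂ) + 2 * (β : ℂ)) * (z t) ^ 4 + (α : ℂ)) * deriv z t ∧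
    deriv (fun s => z s ^ α * w s ^ β) t =
      z t ^ (α - 1) * w t ^ (β - 2) *
        (((α : ℂ) + 4 * (β : ℂ)) * (w t) ^ 2
          - 2 * a * (β : ℂ) * (z t) ^ 4 - 4 * (β : ℂ)) * deriv z t := by
  have hzd : HasDerivAt z (deriv z t) t := (hz t).hasDerivAt
  have hwd : HasDerivAt w (deriv w t) t := (hw t).hasDerivAt
  -- derivative of the curve equation
  have hc : HasDerivAt (fun s => w s ^ 2) ((8 * z t ^ 7 + 4 * a * z t ^ 3) * deriv z t) t := by
    have hfe : (fun s => w s ^ 2) = fun s => z s ^ 8 + a * z s ^ 4 + 1 := funext hcurve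
    rw [hfe]
    have h8 : HasDerivAt (fun s => z s ^ 8) (8 * z t ^ 7 * deriv z t) t := by
      simpa [Function.comp_def] using (hasDerivAt_pow 8 (z t)).comp t hzd
    have h4 : HasDerivAt (fun s => a * z s ^ 4) (a * (4 * z t ^ 3 * deriv z t)) t := by
      simpa [Function.comp_def] using (((hasDerivAt_pow 4 (z t)).comp t hzd)).const_mul a
    have := (h8.add h4).add_const 1
    refine this.congr_deriv ?_; ring
  have hc2 : HasDerivAt (fun s => w s ^ 2) (2 * w t * deriv w t) t := by
    have := (hasDerivAt_pow 2 (w t)).comp t hwd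
    refine this.congr_deriv ?_
    push_cast
    ring
  have hkey : w t * deriv w t = (4 * z t ^ 7 + 2 * a * z t ^ 3) * deriv z t := by
    have h := hc2.unique hc
    linear_combination h / 2
  have hzα : HasDerivAt (fun s => z s ^ α) ((α : ℂ) * z t ^ (α - 1) * deriv z t) t := by
    have h : z t ≠ 0 ∨ 0 ≤ α := by
      rcases le_or_gt α 0 with h | h
      · exact Or.inl (hz0 h t)
      · exact Or.inr h.le
    simpa [Function.comp_def] using (hasDerivAt_zpow α (z t) h).comp t hzd
  have hwβ : HasDerivAt (fun s => w s ^ β) ((β : ℂ) * w t ^ (β - 1) * deriv w t) t := by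
    simpa [Function.comp_def] using (hasDerivAt_zpow β (w t) (Or.inl (hw0 t))).comp t hwd
  have hderiv : deriv (fun s => z s ^ α * w s ^ β) t
      = (α : ℂ) * z t ^ (α - 1) * deriv z t * w t ^ β
        + z t ^ α * ((β : ℂ) * w t ^ (β - 1) * deriv w t) := (hzα.mul hwβ).deriv
  have ew : w t ^ β = w t ^ (β - 2) * w t ^ 2 := by
    rw [← zpow_natCast (w t) 2, ← zpow_add₀ (hw0 t)]
    norm_num
  have ew1 : w t ^ (β - 1) = w t ^ (β - 2) * w t := by
    rw [← zpow_add_one₀ (hw0 t)]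
    ring_nf
  have h1 : deriv (fun s => z s ^ α * w s ^ β) t =
      z t ^ (α - 1) * w t ^ (β - 2) *
        (((α : ℂ) + 4 * (β : ℂ)) * (z t) ^ 8
          + a * ((α : ℂ) + 2 * (β : ℂ)) * (z t) ^ 4 + (α : ℂ)) * deriv z t := by
    rcases eq_or_ne (z t) 0 with hz0' | hzne
    · have hαpos : 0 < α := by
        by_contra h
        exact hz0 (not_lt.mp h) t (hz0') -- contradiction since z t = 0
      have ezα : z t ^ α = 0 := by
        rw [hz0']; exact zero_zpow α (by omega)
      have hw2 : w t ^ 2 = 1 := by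
        rw [hcurve t, hz0']; norm_num
      rw [hderiv, ezα, ew, hw2, hz0']
      ring
    · have ezα : z t ^ α = z t ^ (α - 1) * z t := by
        rw [← zpow_add_one₀ hzne]
        ring_nf
      rw [hderiv, ezα, ew, ew1]
      linear_combination ((β : ℂ) * (z t ^ (α - 1) * z t) * w t ^ (β - 2)) * hkey
        + ((α : ℂ) * z t ^ (α - 1) * w t ^ (β - 2) * deriv z t) * (hcurve t)
  refine ⟨h1, ?_⟩
  rw [h1]
  linear_combination (z t ^ (α - 1) * w t ^ (β - 2) * deriv z t
    * ((α : ℂ) + 4 * (β : ℂ))) * (hcurve t).symm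
end
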